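/- Let Λ be a countable index set and (κ_λ)_{λ∈Λ} ∈ (0,∞)^Λ with sup_λ κ_λ < ∞. Let (φ_α)_{α>0} be a non-linear regularizing filter satisfying (B2): there exist d, e > 0 such that for all κ, α > 0 and all x ∈ ℝ, |x| ≤ dα/κ implies |φ_α(κ,x)| ≤ (eκ/√α)·|x|. Then for every α > 0 and every z = (z_λ)_λ ∈ ℓ²(Λ), the family (φ_α(κ_λ, z_λ)/κ_λ)_λ belongs to ℓ²(Λ). -/
import Mathlib


open scoped ENNReal RealInnerProductSpace
open Filter

noncomputable section

/-- A non-linear regularizing filter: `φ α κ` is (F1) monotone, (F2) nonexpansive,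
(F3) zero at zero, and (F4) converges pointwise to the identity as `α → 0`. -/
def IsRegFilter (φ : ℝ → ℝ → ℝ → ℝ) : Prop :=
  (∀ α > (0 : ℝ), ∀ κ > (0 : ℝ), Monotone (φ α κ)) ∧
  (∀ α > (0 : ℝ), ∀ κ > (0 : ℝ), ∀ x y : ℝ, |φ α κ x - φ α κ y| ≤ |x - y|) ∧
  (∀ α > (0 : ℝ), ∀ κ > (0 : ℝ), φ α κ 0 = 0) ∧
  (∀ κ > (0 : ℝ), ∀ c : ℝ,
    Tendsto (fun α => φ α κ c) (nhdsWithin 0 (Set.Ioi 0)) (nhds c))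

/-- Assumption B: (B1) `α ↦ |φ_α(κ,x)|` increases as `α` decreases, and (B2) there are
`d, e > 0` with `|φ_α(κ,x)| ≤ (eκ/√α)·|x|` whenever `|x| ≤ dα/κ`. -/
def AssumptionB (φ : ℝ → ℝ → ℝ → ℝ) : Prop :=
  (∀ κ > (0 : ℝ), ∀ x : ℝ, ∀ α β : ℝ, 0 < α → α ≤ β → |φ β κ x| ≤ |φ α κ x|) ∧
  (∃ d > (0 : ℝ), ∃ e > (0 : ℝ), ∀ κ > (0 : ℝ), ∀ α > (0 : ℝ), ∀ x : ℝ,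
    |x| ≤ d * α / κ → |φ α κ x| ≤ e * κ / Real.sqrt α * |x|)

/-- Under (B2), for any `z ∈ ℓ²(Λ)` the filtered coefficients
`(φ_α(κ_λ, z_λ)/κ_λ)_λ` belong to `ℓ²(Λ)`. -/
theorem statement7 {Λ : Type*} [Countable Λ]
    (κ : Λ → ℝ) (hκ : ∀ l, 0 < κ l) (hκbd : BddAbove (Set.range κ))
    (φ : ℝ → ℝ → ℝ → ℝ) (hfilter : IsRegFilter φ)
    (d e : ℝ) (hd : 0 < d) (he : 0 < e)
    (hB2 : ∀ κ' > (0 : ℝ), ∀ α > (0 : ℝ), ∀ x : ℝ,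
      |x| ≤ d * α / κ' → |φ α κ' x| ≤ e * κ' / Real.sqrt α * |x|)
    (α : ℝ) (hα : 0 < α) (z : lp (fun _ : Λ => ℝ) 2) :
    Memℓp (fun l => φ α (κ l) (z l) / κ l) 2 := by
  obtain ⟨_, hF2, hF3, _⟩ := hfilter
  set C : ℝ := max (e / Real.sqrt α) (‖z‖ / (d * α)) with hC
  have hsqrt : 0 < Real.sqrt α := Real.sqrt_pos.2 hα
  have hC0 : 0 ≤ C := le_trans (by positivity) (le_max_left _ _)
  -- pointwise bound
  have key : ∀ l, ‖φ α (κ l) (z l) / κ l‖ ≤ C * ‖z l‖ := by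
    intro l
    have hκl := hκ l
    have habs : ‖φ α (κ l) (z l) / κ l‖ = |φ α (κ l) (z l)| / κ l := by
      rw [Real.norm_eq_abs, abs_div, abs_of_pos hκl]
    rw [habs, Real.norm_eq_abs]
    rcases le_or_gt (|z l|) (d * α / κ l) with hle | hgt
    · have h1 := hB2 (κ l) hκl α hα (z l) hle
      have : |φ α (κ l) (z l)| / κ l ≤ e / Real.sqrt α * |z l| := by
        rw [div_le_iff₀ hκl] at *
        calc |φ α (κ l) (z l)| ≤ e * κ l / Real.sqrt α * |z l| := h1
          _ = e / Real.sqrt α * |z l| * κ l := by ring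
      exact this.trans (mul_le_mul_of_nonneg_right (le_max_left _ _) (abs_nonneg _))
    · have hφle : |φ α (κ l) (z l)| ≤ |z l| := by
        have := hF2 α hα (κ l) hκl (z l) 0
        simpa [hF3 α hα (κ l) hκl] using this
      have hzn : |z l| ≤ ‖z‖ := lp.norm_apply_le_norm two_ne_zero z l
      have hinv : 1 / κ l ≤ |z l| / (d * α) := by
        rw [div_le_div_iff₀ hκl (by positivity)]
        have := hgt.le
        rw [div_le_iff₀ hκl] at this
        linarith
      calc |φ α (κ l) (z l)| / κ l ≤ |z l| * (1 / κ l) := by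
            rw [mul_one_div]
            exact div_le_div_of_nonneg_right hφle hκl.le |>.trans_eq rfl
        _ ≤ |z l| * (|z l| / (d * α)) := by
            exact mul_le_mul_of_nonneg_left hinv (abs_nonneg _)
        _ ≤ |z l| * (‖z‖ / (d * α)) := by
            apply mul_le_mul_of_nonneg_left _ (abs_nonneg _)
            exact div_le_div_of_nonneg_right hzn (by positivity)
        _ ≤ C * |z l| := by
            rw [mul_comm]
            exact mul_le_mul_of_nonneg_right (le_max_right _ _) (abs_nonneg _)
  -- summability
  apply memℓp_gen
  have hzsum : Summable fun l => ‖z l‖ ^ (2 : ℝ≥0∞).toReal :=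
    (memℓp_gen_iff (by norm_num)).1 (lp.memℓp z)
  apply Summable.of_nonneg_of_le (fun l => by positivity)
    (fun l => ?_) ((hzsum.mul_left (C ^ (2 : ℝ≥0∞).toReal)))
  rw [← Real.mul_rpow hC0 (norm_nonneg _)]
  exact Real.rpow_le_rpow (norm_nonneg _) (key l) (by norm_num)
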